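/- For any pair (i,k) with n−i+1 < k ≤ n and any n×n matrix X, the polynomial P_{ik}(X) = Σ_{j=i'}^{k} M_{ij}(X)·N_{jk}(X) satisfies P_{ik}(u⁻¹Xu) = P_{ik}(X) for every upper unitriangular matrix u. -/

import Mathlib

open Matrix BigOperators

/-- Clamp a natural number into `Fin n` (identity on values `< n`). -/
def fidx (n : ℕ) (hn : 0 < n) (x : ℕ) : Fin n := ⟨x % n, Nat.mod_lt _ hn⟩

/-- `Dmin n hn k X` is the corner minor `D_k(X)`: determinant of the submatrix of `X`
with rows `k, …, n` and columns `1, …, n-k+1` (1-based indexing). -/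
def Dmin {R : Type*} [CommRing R] (n : ℕ) (hn : 0 < n) (k : ℕ)
    (X : Matrix (Fin n) (Fin n) R) : R :=
  (Matrix.of fun a b : Fin (n - k + 1) =>
    X (fidx n hn (k - 1 + a.val)) (fidx n hn b.val)).det

/-- `Mmin n hn i j X` is the minor `M_{ij}(X)` of order `i' = n-i+1`: rows `i, …, n`
and columns `1, …, i'-1` together with column `j` (1-based indexing). -/
def Mmin {R : Type*} [CommRing R] (n : ℕ) (hn : 0 < n) (i j : ℕ)
    (X : Matrix (Fin n) (Fin n) R) : R :=
  (Matrix.of fun a b : Fin (n - i + 1) =>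
    X (fidx n hn (i - 1 + a.val)) (fidx n hn (if b.val < n - i then b.val else j - 1))).det

/-- `Nmin n hn j k Y` is the minor `N_{jk}(Y)` of order `k' = n-k+1`: rows `j, k+1, …, n`
and columns `1, …, k'` (1-based indexing). -/
def Nmin {R : Type*} [CommRing R] (n : ℕ) (hn : 0 < n) (j k : ℕ)
    (Y : Matrix (Fin n) (Fin n) R) : R :=
  (Matrix.of fun a b : Fin (n - k + 1) =>
    Y (fidx n hn (if a.val = 0 then j - 1 else k + a.val - 1)) (fidx n hn b.val)).det

/-- `Pmin n hn i k X Y = P_{ik}(X,Y) = Σ_{i' ≤ j ≤ k} M_{ij}(X) N_{jk}(Y)`. -/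
def Pmin {R : Type*} [CommRing R] (n : ℕ) (hn : 0 < n) (i k : ℕ)
    (X Y : Matrix (Fin n) (Fin n) R) : R :=
  ∑ j ∈ Finset.Icc (n - i + 1) k, Mmin n hn i j X * Nmin n hn j k Y

/-- Upper unitriangular matrices: ones on the diagonal, zeros below it. -/
def IsUnitriangular {R : Type*} [CommRing R] {n : ℕ}
    (u : Matrix (Fin n) (Fin n) R) : Prop :=
  (∀ i, u i i = 1) ∧ ∀ i j : Fin n, j < i → u i j = 0

/-!
Left multiplication by a unitriangular matrix fixes every `M_{ij}`, whose rows `i, …, n` form a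
final segment, and right multiplication fixes every `N_{jk}`, whose columns `1, …, k'` form an
initial segment. Right multiplication by `u` only mixes earlier columns into the special column
`j` of `M_{ij}`, so `M_{ij}(Xu) = ∑_{c ≤ j} u_{cj} M_{ic}(X)` (Laplace expansion along that
column; columns `c < i'` give repeated columns), and dually
`N_{ck}(uY) = ∑_{j ≥ c} u_{cj} N_{jk}(Y)`. Hence `P_{ik}(Xu, Y) = P_{ik}(X, uY)`, and
`P_{ik}(u⁻¹Xu, u⁻¹Xu) = P_{ik}(Xu, u⁻¹X) = P_{ik}(X, uu⁻¹X) = P_{ik}(X, X)`.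
-/

open Finset

section SubmatrixMul

variable {R : Type*} [CommRing R] {ι κ κ' : Type*} [Fintype ι] [Fintype κ]

theorem Matrix.submatrix_mul_of_rows_closed (w Y : Matrix ι ι R) {ρ : κ → ι}
    (hρ : Function.Injective ρ) (hclosed : ∀ a t, w (ρ a) t ≠ 0 → t ∈ Set.range ρ)
    (γ : κ' → ι) :
    (w * Y).submatrix ρ γ = w.submatrix ρ ρ * Y.submatrix ρ γ := by
  ext a b
  refine (Fintype.sum_of_injective ρ hρ _ _ (fun t ht => ?_) fun _ => rfl).symm
  by_contra h
  exact ht (hclosed a t (left_ne_zero_of_mul h))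

theorem Matrix.submatrix_mul_of_cols_closed (Y u : Matrix ι ι R) {γ : κ → ι}
    (hγ : Function.Injective γ) (hclosed : ∀ b t, u t (γ b) ≠ 0 → t ∈ Set.range γ)
    (ρ : κ' → ι) :
    (Y * u).submatrix ρ γ = Y.submatrix ρ γ * u.submatrix γ γ := by
  ext a b
  refine (Fintype.sum_of_injective γ hγ _ _ (fun t ht => ?_) fun _ => rfl).symm
  by_contra h
  exact ht (hclosed b t (right_ne_zero_of_mul h))

end SubmatrixMul

section Unitriangular

variable {R : Type*} [CommRing R] {n m : ℕ}

theorem IsUnitriangular.det_submatrix_eq_one {u : Matrix (Fin n) (Fin n) R}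
    (hu : IsUnitriangular u) {ρ : Fin m → Fin n} (hρ : StrictMono ρ) :
    (u.submatrix ρ ρ).det = 1 := by
  rw [det_of_isUpperTriangular (M := u.submatrix ρ ρ) fun a b hab => hu.2 _ _ (hρ hab)]
  simp [hu.1]

theorem IsUnitriangular.det_eq_one {u : Matrix (Fin n) (Fin n) R} (hu : IsUnitriangular u) :
    u.det = 1 := by
  simpa using hu.det_submatrix_eq_one strictMono_id

theorem IsUnitriangular.inv {u : Matrix (Fin n) (Fin n) R} (hu : IsUnitriangular u) :
    IsUnitriangular u⁻¹ := by
  have : Invertible u := u.invertibleOfIsUnitDet (by simp [hu.det_eq_one])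
  have hlow : u⁻¹.IsUpperTriangular :=
    blockTriangular_inv_of_blockTriangular fun a b hab => hu.2 a b hab
  refine ⟨fun s => ?_, fun a b hab => hlow hab⟩
  have hdiag : (u * u⁻¹) s s = u s s * u⁻¹ s s := by
    rw [mul_apply, sum_eq_single s]
    · intro t _ hts
      rcases hts.lt_or_gt with h | h
      · rw [hu.2 s t h, zero_mul]
      · rw [hlow h, mul_zero]
    · simp
  simpa [hu.1, mul_inv_of_invertible] using hdiag.symm

theorem IsUnitriangular.le_of_ne_zero {u : Matrix (Fin n) (Fin n) R} (hu : IsUnitriangular u)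
    {s t : Fin n} (h : u s t ≠ 0) : s ≤ t :=
  not_lt.1 fun hlt => h (hu.2 s t hlt)

theorem IsUnitriangular.det_submatrix_mul_left {w : Matrix (Fin n) (Fin n) R}
    (hw : IsUnitriangular w) (Y : Matrix (Fin n) (Fin n) R) {ρ : Fin m → Fin n}
    (hρ : StrictMono ρ) (hup : IsUpperSet (Set.range ρ)) (γ : Fin m → Fin n) :
    ((w * Y).submatrix ρ γ).det = (Y.submatrix ρ γ).det := by
  rw [submatrix_mul_of_rows_closed w Y hρ.injective
      (fun a _ h => hup (hw.le_of_ne_zero h) ⟨a, rfl⟩),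
    det_mul, hw.det_submatrix_eq_one hρ, one_mul]

theorem IsUnitriangular.det_submatrix_mul_right {u : Matrix (Fin n) (Fin n) R}
    (hu : IsUnitriangular u) (Y : Matrix (Fin n) (Fin n) R) {γ : Fin m → Fin n}
    (hγ : StrictMono γ) (hlow : IsLowerSet (Set.range γ)) (ρ : Fin m → Fin n) :
    ((Y * u).submatrix ρ γ).det = (Y.submatrix ρ γ).det := by
  rw [submatrix_mul_of_cols_closed Y u hγ.injective
      (fun b _ h => hlow (hu.le_of_ne_zero h) ⟨b, rfl⟩),
    det_mul, hu.det_submatrix_eq_one hγ, mul_one]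

end Unitriangular

section RepeatedIndex

variable {R : Type*} [CommRing R] {ι : Type*} {m : ℕ}

theorem Matrix.det_submatrix_insertNth_eq_zero (Y : Matrix ι ι R) (ρ : Fin (m + 1) → ι)
    (p : Fin (m + 1)) (γ : Fin m → ι) {t : ι} (ht : t ∈ Set.range γ) :
    (Y.submatrix ρ (p.insertNth t γ)).det = 0 := by
  obtain ⟨b, rfl⟩ := ht
  exact det_zero_of_column_eq (p.succAbove_ne b).symm fun a => by simp

theorem Matrix.det_insertNth_submatrix_eq_zero (Y : Matrix ι ι R) (ρ : Fin m → ι)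
    (p : Fin (m + 1)) (γ : Fin (m + 1) → ι) {t : ι} (ht : t ∈ Set.range ρ) :
    (Y.submatrix (p.insertNth t ρ) γ).det = 0 := by
  obtain ⟨a, rfl⟩ := ht
  exact det_zero_of_row_eq (p.succAbove_ne a).symm (by ext; simp)

end RepeatedIndex

section Expansion

variable {R : Type*} [CommRing R] {ι : Type*} [Fintype ι] {m : ℕ}

theorem Matrix.det_submatrix_mul_insertNth (Y u : Matrix ι ι R) (ρ : Fin (m + 1) → ι)
    (p : Fin (m + 1)) (γ : Fin m → ι) (t : ι)
    (hγ : ∀ ρ' : Fin m → ι, ((Y * u).submatrix ρ' γ).det = (Y.submatrix ρ' γ).det) :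
    ((Y * u).submatrix ρ (p.insertNth t γ)).det
      = ∑ s, u s t * (Y.submatrix ρ (p.insertNth s γ)).det := by
  simp only [det_succ_column _ p, submatrix_apply, Fin.insertNth_apply_same, submatrix_submatrix,
    Fin.insertNth_comp_succAbove, hγ, mul_apply, sum_mul, mul_sum]
  rw [sum_comm]
  exact sum_congr rfl fun _ _ => sum_congr rfl fun _ _ => by ring

theorem Matrix.mul_det_submatrix_insertNth (w Y : Matrix ι ι R) (ρ : Fin m → ι)
    (p : Fin (m + 1)) (γ : Fin (m + 1) → ι) (t : ι)
    (hρ : ∀ γ' : Fin m → ι, ((w * Y).submatrix ρ γ').det = (Y.submatrix ρ γ').det) :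
    ((w * Y).submatrix (p.insertNth t ρ) γ).det
      = ∑ s, w t s * (Y.submatrix (p.insertNth s ρ) γ).det := by
  rw [← det_transpose, transpose_submatrix, transpose_mul,
    det_submatrix_mul_insertNth _ _ _ _ _ _ fun γ' => ?_]
  · simp [← transpose_submatrix]
  · rw [← transpose_mul, ← transpose_submatrix, det_transpose, ← transpose_submatrix,
      det_transpose, hρ]

end Expansion

section Minors

variable {R : Type*} [CommRing R] {n : ℕ} (hn : 0 < n)

theorem fidx_val {x : ℕ} (hx : x < n) : (fidx n hn x).val = x := Nat.mod_eq_of_lt hx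

theorem fidx_self (t : Fin n) : fidx n hn t = t := Fin.ext (fidx_val hn t.isLt)

theorem sum_fin_eq_sum_Icc {M : Type*} [AddCommMonoid M] {a b : ℕ} (ha : 1 ≤ a) (hb : b ≤ n)
    (f : Fin n → M) (hf : ∀ s, f s ≠ 0 → a ≤ s.val + 1 ∧ s.val + 1 ≤ b) :
    ∑ s, f s = ∑ c ∈ Icc a b, f (fidx n hn (c - 1)) := by
  refine sum_bij_ne_zero (fun s _ _ => s.val + 1) (fun s _ hs => mem_Icc.2 (hf s hs))
    (fun s _ _ t _ _ h => Fin.ext (by omega)) (fun c hc hne => ?_)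
    (fun s _ _ => by rw [Nat.add_sub_cancel, fidx_self])
  rw [mem_Icc] at hc
  exact ⟨fidx n hn (c - 1), mem_univ _, hne, by rw [fidx_val hn (by omega)]; omega⟩

def finInterval (n : ℕ) (hn : 0 < n) (s m : ℕ) : Fin m → Fin n := fun a => fidx n hn (s + a)

variable {s m : ℕ}

theorem finInterval_val (h : s + m ≤ n) (a : Fin m) : (finInterval n hn s m a).val = s + a :=
  fidx_val hn (by omega)

theorem finInterval_strictMono (h : s + m ≤ n) : StrictMono (finInterval n hn s m) :=
  fun a b hab => by
    rw [Fin.lt_def, finInterval_val hn h, finInterval_val hn h]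
    exact Nat.add_lt_add_left hab s

theorem mem_range_finInterval (h : s + m ≤ n) {t : Fin n} :
    t ∈ Set.range (finInterval n hn s m) ↔ s ≤ t.val ∧ t.val < s + m := by
  constructor
  · rintro ⟨a, rfl⟩
    rw [finInterval_val hn h]
    omega
  · intro ht
    exact ⟨⟨t - s, by omega⟩, Fin.ext (by rw [finInterval_val hn h, Fin.val_mk]; omega)⟩

theorem isUpperSet_range_finInterval (h : s + m = n) :
    IsUpperSet (Set.range (finInterval n hn s m)) := by
  intro a t hat ha
  rw [mem_range_finInterval hn h.le] at ha ⊢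
  have := t.isLt
  rw [Fin.le_def] at hat
  omega

theorem isLowerSet_range_finInterval_zero (h : m ≤ n) :
    IsLowerSet (Set.range (finInterval n hn 0 m)) := by
  intro a t hat ha
  rw [mem_range_finInterval hn (by omega)] at ha ⊢
  rw [Fin.le_def] at hat
  omega

theorem Mmin_eq_det_submatrix (i j : ℕ) (X : Matrix (Fin n) (Fin n) R) :
    Mmin n hn i j X = (X.submatrix (finInterval n hn (i - 1) (n - i + 1))
      ((Fin.last (n - i)).insertNth (fidx n hn (j - 1)) (finInterval n hn 0 (n - i)))).det := by
  unfold Mmin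
  congr
  ext a b
  refine Fin.lastCases ?_ (fun b => ?_) b <;> simp [finInterval, Fin.insertNth_last']

theorem Nmin_eq_det_submatrix (j k : ℕ) (Y : Matrix (Fin n) (Fin n) R) :
    Nmin n hn j k Y = (Y.submatrix ((0 : Fin (n - k + 1)).insertNth (fidx n hn (j - 1))
      (finInterval n hn k (n - k))) (finInterval n hn 0 (n - k + 1))).det := by
  unfold Nmin
  congr
  ext a b
  refine Fin.cases ?_ (fun a => ?_) a <;> simp [finInterval]

end Minors

section Invariance

variable {R : Type*} [CommRing R] {n : ℕ} (hn : 0 < n)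

theorem Mmin_mul_left {i : ℕ} (hi : 1 ≤ i) (hin : i ≤ n) (j : ℕ)
    {w : Matrix (Fin n) (Fin n) R} (hw : IsUnitriangular w) (X : Matrix (Fin n) (Fin n) R) :
    Mmin n hn i j (w * X) = Mmin n hn i j X := by
  simp only [Mmin_eq_det_submatrix]
  exact hw.det_submatrix_mul_left X (finInterval_strictMono hn (by omega))
    (isUpperSet_range_finInterval hn (by omega)) _

theorem Nmin_mul_right {k : ℕ} (hk : 1 ≤ k) (j : ℕ)
    {u : Matrix (Fin n) (Fin n) R} (hu : IsUnitriangular u) (Y : Matrix (Fin n) (Fin n) R) :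
    Nmin n hn j k (Y * u) = Nmin n hn j k Y := by
  simp only [Nmin_eq_det_submatrix]
  exact hu.det_submatrix_mul_right Y (finInterval_strictMono hn (by omega))
    (isLowerSet_range_finInterval_zero hn (by omega)) _

theorem Mmin_mul_right {i j : ℕ} (hj : n - i + 1 ≤ j) (hjn : j ≤ n)
    {u : Matrix (Fin n) (Fin n) R} (hu : IsUnitriangular u) (Y : Matrix (Fin n) (Fin n) R) :
    Mmin n hn i j (Y * u) = ∑ c ∈ Icc (n - i + 1) j,
      u (fidx n hn (c - 1)) (fidx n hn (j - 1)) * Mmin n hn i c Y := by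
  have hlow := isLowerSet_range_finInterval_zero hn (m := n - i) (by omega)
  simp only [Mmin_eq_det_submatrix]
  rw [det_submatrix_mul_insertNth _ _ _ _ _ _ fun ρ =>
    hu.det_submatrix_mul_right Y (finInterval_strictMono hn (by omega)) hlow ρ]
  refine sum_fin_eq_sum_Icc hn (by omega) hjn _ fun s hs => ?_
  have hsj := hu.le_of_ne_zero (left_ne_zero_of_mul hs)
  rw [Fin.le_def, fidx_val hn (by omega)] at hsj
  have hsi : n - i ≤ s.val := not_lt.1 fun hlt => right_ne_zero_of_mul hs <|
    det_submatrix_insertNth_eq_zero _ _ _ _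
      ((mem_range_finInterval hn (by omega)).2 ⟨Nat.zero_le _, by omega⟩)
  omega

theorem Nmin_mul_left {j k : ℕ} (hj : 1 ≤ j) (hjk : j ≤ k) (hkn : k ≤ n)
    {w : Matrix (Fin n) (Fin n) R} (hw : IsUnitriangular w) (Y : Matrix (Fin n) (Fin n) R) :
    Nmin n hn j k (w * Y) = ∑ b ∈ Icc j k,
      w (fidx n hn (j - 1)) (fidx n hn (b - 1)) * Nmin n hn b k Y := by
  have hup := isUpperSet_range_finInterval hn (s := k) (m := n - k) (by omega)
  simp only [Nmin_eq_det_submatrix]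
  rw [mul_det_submatrix_insertNth _ _ _ _ _ _ fun γ =>
    hw.det_submatrix_mul_left Y (finInterval_strictMono hn (by omega)) hup γ]
  refine sum_fin_eq_sum_Icc hn hj hkn _ fun s hs => ?_
  have hjs := hw.le_of_ne_zero (left_ne_zero_of_mul hs)
  rw [Fin.le_def, fidx_val hn (by omega)] at hjs
  have hsk : s.val < k := not_le.1 fun hle => right_ne_zero_of_mul hs <|
    det_insertNth_submatrix_eq_zero _ _ _ _
      ((mem_range_finInterval hn (by omega)).2 ⟨hle, by omega⟩)
  omega

theorem Pmin_mul_left {i : ℕ} (hi : 1 ≤ i) (hin : i ≤ n) (k : ℕ)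
    {w : Matrix (Fin n) (Fin n) R} (hw : IsUnitriangular w) (X Y : Matrix (Fin n) (Fin n) R) :
    Pmin n hn i k (w * X) Y = Pmin n hn i k X Y :=
  sum_congr rfl fun j _ => by rw [Mmin_mul_left hn hi hin j hw]

theorem Pmin_mul_right (i : ℕ) {k : ℕ} (hk : 1 ≤ k)
    {u : Matrix (Fin n) (Fin n) R} (hu : IsUnitriangular u) (X Y : Matrix (Fin n) (Fin n) R) :
    Pmin n hn i k X (Y * u) = Pmin n hn i k X Y :=
  sum_congr rfl fun j _ => by rw [Nmin_mul_right hn hk j hu]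

theorem Pmin_mul_right_eq_mul_left (i : ℕ) {k : ℕ} (hkn : k ≤ n)
    {u : Matrix (Fin n) (Fin n) R} (hu : IsUnitriangular u) (X Y : Matrix (Fin n) (Fin n) R) :
    Pmin n hn i k (X * u) Y = Pmin n hn i k X (u * Y) := by
  calc Pmin n hn i k (X * u) Y
      = ∑ j ∈ Icc (n - i + 1) k, ∑ c ∈ Icc (n - i + 1) j,
          u (fidx n hn (c - 1)) (fidx n hn (j - 1)) * Mmin n hn i c X * Nmin n hn j k Y := by
        refine sum_congr rfl fun j hj => ?_
        rw [mem_Icc] at hj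
        rw [Mmin_mul_right hn hj.1 (hj.2.trans hkn) hu, sum_mul]
    _ = ∑ c ∈ Icc (n - i + 1) k, ∑ j ∈ Icc c k,
          u (fidx n hn (c - 1)) (fidx n hn (j - 1)) * Mmin n hn i c X * Nmin n hn j k Y :=
        sum_comm' fun j c => by simp only [mem_Icc]; omega
    _ = Pmin n hn i k X (u * Y) := by
        refine sum_congr rfl fun c hc => ?_
        rw [mem_Icc] at hc
        rw [Nmin_mul_left hn (by omega) hc.2 hkn hu, mul_sum]
        exact sum_congr rfl fun _ _ => by ring

end Invariance

/-- the polynomials `P_{ik}(X) = P_{ik}(X,X)` (for `i' < k ≤ n`) are invariant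
under conjugation by an upper unitriangular matrix. -/
theorem Pmin_diag_unitriangular_invariant {K : Type*} [Field K] (n : ℕ) (hn : 0 < n)
    (i k : ℕ) (hi : 1 ≤ i) (hin : i ≤ n) (hik : n - i + 1 < k) (hkn : k ≤ n)
    (X u : Matrix (Fin n) (Fin n) K) (hu : IsUnitriangular u) :
    Pmin n hn i k (u⁻¹ * X * u) (u⁻¹ * X * u) = Pmin n hn i k X X := by
  calc Pmin n hn i k (u⁻¹ * X * u) (u⁻¹ * X * u)
      = Pmin n hn i k (X * u) (u⁻¹ * X) := by
        rw [Pmin_mul_right hn i (by omega) hu, mul_assoc, Pmin_mul_left hn hi hin k hu.inv]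
    _ = Pmin n hn i k X (u * (u⁻¹ * X)) := Pmin_mul_right_eq_mul_left hn i hkn hu X _
    _ = Pmin n hn i k X X := by
        rw [← mul_assoc, mul_nonsing_inv u (by simp [hu.det_eq_one]), one_mul]
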